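/- Soundness and completeness of D-GMSR for a single conjunction: for real-valued C^1 predicate functions f_1,…,f_m on R^n and any x ∈ R^n, the Boolean formula (f_1(x) ≥ 0) ∧ … ∧ (f_m(x) ≥ 0) restricted to strict signs satisfies: h∧((f_1(x),…,f_m(x))) > 0 implies f_i(x) > 0 for all i (hence the conjunction holds), and h∧((f_1(x),…,f_m(x))) < 0 implies f_i(x) < 0 for some i (hence the conjunction fails). -/

import Mathlib

open Finset Real Filter Topology

noncomputable def M0 {n : ℕ} (ε : ℝ) (w : Fin n → ℕ) (z : Fin n → ℝ) : ℝ :=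
  (ε ^ (∑ i, w i) + ∏ i, z i ^ w i) ^ ((1 : ℝ) / (∑ i, w i))

noncomputable def Mp {n : ℕ} (ε : ℝ) (p : ℕ) (w : Fin n → ℕ) (z : Fin n → ℝ) : ℝ :=
  (ε ^ p + (1 / (∑ i, (w i : ℝ))) * ∑ i, (w i : ℝ) * z i ^ p) ^ ((1 : ℝ) / p)

noncomputable def posSq {n : ℕ} (y : Fin n → ℝ) : Fin n → ℝ := fun i => max (y i) 0 ^ 2

noncomputable def negSq {n : ℕ} (y : Fin n → ℝ) : Fin n → ℝ := fun i => min (y i) 0 ^ 2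

noncomputable def hConj {n : ℕ} (ε : ℝ) (p : ℕ) (w : Fin n → ℕ) (y : Fin n → ℝ) : ℝ :=
  M0 ε w (posSq y) ^ ((1 : ℝ) / 2) - Mp ε p w (negSq y) ^ ((1 : ℝ) / 2)

noncomputable def hDisj {n : ℕ} (ε : ℝ) (p : ℕ) (w : Fin n → ℕ) (y : Fin n → ℝ) : ℝ :=
  - hConj ε p w (fun i => - y i)

/-! Both means are at least `ε`, since `ε` is their value at the origin and the added term is
nonnegative. A nonpositive `yᵢ` kills the product, so the geometric mean of the positive parts
collapses to `ε` and `hConj ≤ 0`; if no `yᵢ` is negative the power mean of the negative parts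
collapses to `ε` and `hConj ≥ 0`. Both implications are the contrapositives. -/

lemma Real.le_rpow_one_div_pow_add {ε t : ℝ} {k : ℕ} (hε : 0 ≤ ε) (hk : k ≠ 0) (ht : 0 ≤ t) :
    ε ≤ (ε ^ k + t) ^ ((1 : ℝ) / k) := by
  calc ε = (ε ^ k) ^ ((1 : ℝ) / k) := by rw [one_div, Real.pow_rpow_inv_natCast hε hk]
    _ ≤ (ε ^ k + t) ^ ((1 : ℝ) / k) := by gcongr; linarith

section Means

variable {n : ℕ} {ε : ℝ} {p : ℕ} {w : Fin n → ℕ}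

lemma posSq_nonneg (y : Fin n → ℝ) (i : Fin n) : 0 ≤ posSq y i := sq_nonneg _

lemma negSq_nonneg (y : Fin n → ℝ) (i : Fin n) : 0 ≤ negSq y i := sq_nonneg _

lemma le_M0 (hε : 0 ≤ ε) (hw : ∑ i, w i ≠ 0) {z : Fin n → ℝ} (hz : ∀ i, 0 ≤ z i) :
    ε ≤ M0 ε w z :=
  Real.le_rpow_one_div_pow_add hε hw (Finset.prod_nonneg fun i _ => pow_nonneg (hz i) _)

lemma le_Mp (hε : 0 ≤ ε) (hp : p ≠ 0) {z : Fin n → ℝ} (hz : ∀ i, 0 ≤ z i) :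
    ε ≤ Mp ε p w z := by
  refine Real.le_rpow_one_div_pow_add hε hp (mul_nonneg (by positivity) ?_)
  exact Finset.sum_nonneg fun i _ => mul_nonneg (Nat.cast_nonneg _) (pow_nonneg (hz i) _)

lemma M0_posSq_of_exists_nonpos (hε : 0 ≤ ε) (hw : ∀ i, 0 < w i) {y : Fin n → ℝ}
    (hy : ∃ i, y i ≤ 0) : M0 ε w (posSq y) = ε := by
  obtain ⟨i, hi⟩ := hy
  have hsum : ∑ j, w j ≠ 0 := (Finset.sum_pos (fun j _ => hw j) ⟨i, Finset.mem_univ _⟩).ne'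
  have hprod : ∏ j, posSq y j ^ w j = 0 :=
    Finset.prod_eq_zero (Finset.mem_univ i) (by simp [posSq, max_eq_right hi, (hw i).ne'])
  rw [M0, hprod, add_zero, one_div, Real.pow_rpow_inv_natCast hε hsum]

lemma Mp_negSq_of_nonneg (hε : 0 ≤ ε) (hp : p ≠ 0) {y : Fin n → ℝ} (hy : ∀ i, 0 ≤ y i) :
    Mp ε p w (negSq y) = ε := by
  have hsum : ∑ i, (w i : ℝ) * negSq y i ^ p = 0 :=
    Finset.sum_eq_zero fun i _ => by simp [negSq, min_eq_right (hy i), hp]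
  rw [Mp, hsum, mul_zero, add_zero, one_div, Real.pow_rpow_inv_natCast hε hp]

end Means

section Conjunction

variable {n : ℕ} {ε : ℝ} {p : ℕ} {w : Fin n → ℕ} {y : Fin n → ℝ}

lemma hConj_nonpos_of_exists_nonpos (hε : 0 ≤ ε) (hp : p ≠ 0) (hw : ∀ i, 0 < w i)
    (hy : ∃ i, y i ≤ 0) : hConj ε p w y ≤ 0 := by
  rw [hConj, sub_nonpos, M0_posSq_of_exists_nonpos hε hw hy]
  exact Real.rpow_le_rpow hε (le_Mp hε hp (negSq_nonneg y)) (by norm_num)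

lemma hConj_nonneg_of_nonneg (hε : 0 ≤ ε) (hp : p ≠ 0) (hw : ∑ i, w i ≠ 0)
    (hy : ∀ i, 0 ≤ y i) : 0 ≤ hConj ε p w y := by
  rw [hConj, sub_nonneg, Mp_negSq_of_nonneg hε hp hy]
  exact Real.rpow_le_rpow hε (le_M0 hε hw (posSq_nonneg y)) (by norm_num)

lemma pos_of_hConj_pos (hε : 0 ≤ ε) (hp : p ≠ 0) (hw : ∀ i, 0 < w i)
    (h : 0 < hConj ε p w y) (i : Fin n) : 0 < y i := by
  by_contra! hi
  exact (hConj_nonpos_of_exists_nonpos hε hp hw ⟨i, hi⟩).not_gt h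

lemma exists_neg_of_hConj_neg (hε : 0 ≤ ε) (hp : p ≠ 0) (hw : ∑ i, w i ≠ 0)
    (h : hConj ε p w y < 0) : ∃ i, y i < 0 := by
  by_contra! hy
  exact (hConj_nonneg_of_nonneg hε hp hw hy).not_gt h

end Conjunction

theorem hConj_sound_complete_conjunction_general {d m : ℕ} (hm : 0 < m)
    (ε : ℝ) (hε : 0 < ε) (p : ℕ) (hp : 0 < p) (w : Fin m → ℕ) (hw : ∀ i, 0 < w i)
    (f : Fin m → (Fin d → ℝ) → ℝ) (x : Fin d → ℝ) :
    (0 < hConj ε p w (fun i => f i x) → ∀ i, 0 < f i x) ∧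
    (hConj ε p w (fun i => f i x) < 0 → ∃ i, f i x < 0) := by
  have hsum : ∑ i, w i ≠ 0 := (Finset.sum_pos (fun i _ => hw i) ⟨⟨0, hm⟩, Finset.mem_univ _⟩).ne'
  exact ⟨pos_of_hConj_pos hε.le hp.ne' hw, exists_neg_of_hConj_neg hε.le hp.ne' hsum⟩

theorem hConj_sound_complete_conjunction {d m : ℕ} (hm : 0 < m)
    (ε : ℝ) (hε : 0 < ε) (p : ℕ) (hp : 0 < p) (w : Fin m → ℕ) (hw : ∀ i, 0 < w i)
    (f : Fin m → (Fin d → ℝ) → ℝ) (hf : ∀ i, ContDiff ℝ 1 (f i)) (x : Fin d → ℝ) :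
    (0 < hConj ε p w (fun i => f i x) → ∀ i, 0 < f i x) ∧
    (hConj ε p w (fun i => f i x) < 0 → ∃ i, f i x < 0) :=
  hConj_sound_complete_conjunction_general hm ε hε p hp w hw f x
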